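/- Under the assumptions of infinite sampling and that each incorrect reasoning path yields a unique answer, the model error of self-consistency is at most the model error of perplexity: Σ_{ŷ} (p̂^(SC)(ŷ) − 𝟙[ŷ = y])² ≤ Σ_{t̂ ∈ R} (p(t̂) − 𝟙[g(t̂) = y])², where p̂^(SC)(ŷ) = Σ_{t̂ ∈ R} 𝟙[g(t̂) = ŷ] p(t̂). The inequality is strict if at least two distinct reasoning paths yield the correct answer. -/

import Mathlib

/-!
Group the reasoning paths by their answer: the perplexity error is then a sum over answers of
`∑_{g t = a} (p t - [a = y])²`, to be compared with `(∑_{g t = a} p t - [a = y])²`. For a wrong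
answer the fibre is a single path and the two agree. For the correct answer, Cauchy–Schwarz
`(∑ p)² ≤ n ∑ p²` on a fibre of `n` paths gives
`n (∑ (p - 1)² - (∑ p - 1)²) ≥ (n - 1)(n - (∑ p)²)`, which is nonnegative, and positive once
`n ≥ 2`, because `0 ≤ ∑ p ≤ 1`.
-/

open Finset

section SumSqSubOne

variable {ι : Type*} (s : Finset ι) (f : ι → ℝ)

lemma card_sub_one_mul_card_sub_sq_sum_le :
    (#s - 1) * (#s - (∑ i ∈ s, f i) ^ 2)
      ≤ #s * (∑ i ∈ s, (f i - 1) ^ 2 - (∑ i ∈ s, f i - 1) ^ 2) := by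
  have hexpand : ∑ i ∈ s, (f i - 1) ^ 2 = ∑ i ∈ s, f i ^ 2 - 2 * ∑ i ∈ s, f i + #s := by
    simp only [sub_sq, one_pow, mul_one, sum_add_distrib, sum_sub_distrib, ← mul_sum,
      sum_const, nsmul_eq_mul]
  rw [hexpand]
  nlinarith [sq_sum_le_card_mul_sum_sq (s := s) (f := f)]

variable {s f}

lemma sq_sum_sub_one_le_sum_sq_sub_one (hs : s.Nonempty) (hf : (∑ i ∈ s, f i) ^ 2 ≤ #s) :
    (∑ i ∈ s, f i - 1) ^ 2 ≤ ∑ i ∈ s, (f i - 1) ^ 2 := by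
  have hcard : (1 : ℝ) ≤ #s := by exact_mod_cast hs.card_pos
  have := card_sub_one_mul_card_sub_sq_sum_le s f
  nlinarith [mul_nonneg (sub_nonneg.2 hcard) (sub_nonneg.2 hf)]

lemma sq_sum_sub_one_lt_sum_sq_sub_one (hs : 2 ≤ #s) (hf : (∑ i ∈ s, f i) ^ 2 < #s) :
    (∑ i ∈ s, f i - 1) ^ 2 < ∑ i ∈ s, (f i - 1) ^ 2 := by
  have hcard : (2 : ℝ) ≤ #s := by exact_mod_cast hs
  have := card_sub_one_mul_card_sub_sq_sum_le s f
  nlinarith [mul_pos (by linarith : (0 : ℝ) < #s - 1) (sub_pos.2 hf)]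

end SumSqSubOne

section Fibres

variable {T A : Type*} [DecidableEq A] {R : Finset T} {prob : T → ℝ} {g : T → A} {y : A}

lemma sq_sum_filter_le_one (h0 : ∀ t ∈ R, 0 ≤ prob t) (hsum : ∑ t ∈ R, prob t ≤ 1) (a : A) :
    (∑ t ∈ R with g t = a, prob t) ^ 2 ≤ 1 := by
  have hnonneg : 0 ≤ ∑ t ∈ R with g t = a, prob t :=
    sum_nonneg fun t ht => h0 t (mem_filter.1 ht).1
  have hle : ∑ t ∈ R with g t = a, prob t ≤ 1 :=
    (sum_le_sum_of_subset_of_nonneg (filter_subset _ _) fun t ht _ => h0 t ht).trans hsum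
  nlinarith

lemma sum_filter_sq_sub_one_eq :
    ∑ t ∈ R with g t = y, (prob t - if g t = y then 1 else 0) ^ 2
      = ∑ t ∈ R with g t = y, (prob t - 1) ^ 2 :=
  sum_congr rfl fun t ht => by rw [if_pos (mem_filter.1 ht).2]

lemma sq_confidence_sub_le_sum_filter
    (h0 : ∀ t ∈ R, 0 ≤ prob t) (hsum : ∑ t ∈ R, prob t ≤ 1)
    (huniq : ∀ t₁ ∈ R, ∀ t₂ ∈ R, g t₁ ≠ y → g t₁ = g t₂ → t₁ = t₂) {a : A} (ha : a ∈ R.image g) :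
    ((∑ t ∈ R, if g t = a then prob t else 0) - if a = y then 1 else 0) ^ 2
      ≤ ∑ t ∈ R with g t = a, (prob t - if g t = y then 1 else 0) ^ 2 := by
  rw [← sum_filter]
  obtain ⟨t, ht, rfl⟩ := mem_image.1 ha
  by_cases hy : g t = y
  · have hfibre : (R.filter fun t' => g t' = y).Nonempty := ⟨t, mem_filter.2 ⟨ht, hy⟩⟩
    rw [if_pos hy, hy, sum_filter_sq_sub_one_eq]
    refine sq_sum_sub_one_le_sum_sq_sub_one hfibre ?_
    exact (sq_sum_filter_le_one h0 hsum y).trans (by exact_mod_cast hfibre.card_pos)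
  · have hsingleton : R.filter (fun t' => g t' = g t) = {t} := by
      ext t'
      simp only [mem_filter, mem_singleton]
      exact ⟨fun ⟨ht', hg⟩ => (huniq t ht t' ht' hy hg.symm).symm, by rintro rfl; exact ⟨ht, rfl⟩⟩
    simp [hsingleton, hy]

lemma sq_confidence_sub_lt_sum_filter
    (h0 : ∀ t ∈ R, 0 ≤ prob t) (hsum : ∑ t ∈ R, prob t ≤ 1)
    {t₁ t₂ : T} (h₁ : t₁ ∈ R) (h₂ : t₂ ∈ R) (hne : t₁ ≠ t₂) (hg₁ : g t₁ = y) (hg₂ : g t₂ = y) :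
    ((∑ t ∈ R, if g t = y then prob t else 0) - if y = y then 1 else 0) ^ 2
      < ∑ t ∈ R with g t = y, (prob t - if g t = y then 1 else 0) ^ 2 := by
  rw [← sum_filter, if_pos rfl, sum_filter_sq_sub_one_eq]
  have hcard : 2 ≤ #(R.filter fun t => g t = y) :=
    one_lt_card.2 ⟨t₁, mem_filter.2 ⟨h₁, hg₁⟩, t₂, mem_filter.2 ⟨h₂, hg₂⟩, hne⟩
  refine sq_sum_sub_one_lt_sum_sq_sub_one hcard ?_
  exact (sq_sum_filter_le_one h0 hsum y).trans_lt (by exact_mod_cast hcard)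

end Fibres

theorem stmt11_general {T A : Type*} [DecidableEq A]
    (R : Finset T) (prob : T → ℝ) (g : T → A) (y : A)
    (hprob : ∀ t ∈ R, prob t ∈ Set.Icc (0:ℝ) 1)
    (hsum : ∑ t ∈ R, prob t ≤ 1)
    (huniq : ∀ t₁ ∈ R, ∀ t₂ ∈ R, g t₁ ≠ y → g t₁ = g t₂ → t₁ = t₂) :
    (∑ a ∈ R.image g,
        ((∑ t ∈ R, if g t = a then prob t else 0) - if a = y then 1 else 0) ^ 2)
      ≤ ∑ t ∈ R, (prob t - if g t = y then 1 else 0) ^ 2 ∧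
    ((∃ t₁ ∈ R, ∃ t₂ ∈ R, t₁ ≠ t₂ ∧ g t₁ = y ∧ g t₂ = y) →
      (∑ a ∈ R.image g,
        ((∑ t ∈ R, if g t = a then prob t else 0) - if a = y then 1 else 0) ^ 2)
      < ∑ t ∈ R, (prob t - if g t = y then 1 else 0) ^ 2) := by
  have h0 : ∀ t ∈ R, 0 ≤ prob t := fun t ht => (hprob t ht).1
  have hfibres := fun a (ha : a ∈ R.image g) => sq_confidence_sub_le_sum_filter h0 hsum huniq ha
  rw [← sum_fiberwise_of_maps_to (t := R.image g) (fun t ht => mem_image_of_mem g ht)]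
  refine ⟨sum_le_sum hfibres, ?_⟩
  rintro ⟨t₁, h₁, t₂, h₂, hne, hg₁, hg₂⟩
  exact sum_lt_sum hfibres ⟨y, hg₁ ▸ mem_image_of_mem g h₁,
    sq_confidence_sub_lt_sum_filter h0 hsum h₁ h₂ hne hg₁ hg₂⟩

theorem stmt11 {T A : Type*} [DecidableEq T] [DecidableEq A]
    (R : Finset T) (prob : T → ℝ) (g : T → A) (y : A)
    (hprob : ∀ t ∈ R, prob t ∈ Set.Icc (0:ℝ) 1)
    (hsum : ∑ t ∈ R, prob t ≤ 1)
    (huniq : ∀ t₁ ∈ R, ∀ t₂ ∈ R, g t₁ ≠ y → g t₁ = g t₂ → t₁ = t₂) :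
    (∑ a ∈ R.image g,
        ((∑ t ∈ R, if g t = a then prob t else 0) - if a = y then 1 else 0) ^ 2)
      ≤ ∑ t ∈ R, (prob t - if g t = y then 1 else 0) ^ 2 ∧
    ((∃ t₁ ∈ R, ∃ t₂ ∈ R, t₁ ≠ t₂ ∧ g t₁ = y ∧ g t₂ = y) →
      (∑ a ∈ R.image g,
        ((∑ t ∈ R, if g t = a then prob t else 0) - if a = y then 1 else 0) ^ 2)
      < ∑ t ∈ R, (prob t - if g t = y then 1 else 0) ^ 2) :=
  stmt11_general R prob g y hprob hsum huniq
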